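/- For positive integers n and a weakly increasing vector u of positive integers of length n, the map sending a sequence a ∈ ℕ^n to itself is a bijection from the set of increasing prime u-parking functions to the set of increasing u'-parking functions, where u' = (u_0, u_0, u_1, ..., u_{n-2}); in particular these two sets have the same cardinality. -/
import Mathlib


/-- `#{j : a j < t}`. -/
def countLt {n : ℕ} (a : Fin n → ℕ) (t : ℕ) : ℕ :=
  (Finset.univ.filter fun j => a j < t).card

/-- `a` is a `u`-parking function: `#{j : a j < u i} ≥ i + 1` for all `i = 0, …, n-1`. -/
def IsUPF {n : ℕ} (u : Fin n → ℕ) (a : Fin n → ℕ) : Prop :=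
  ∀ i : Fin n, (i : ℕ) + 1 ≤ countLt a (u i)

/-- `a` is a prime `u`-parking function. -/
def IsPrimeUPF {n : ℕ} (u : Fin n → ℕ) (a : Fin n → ℕ) : Prop :=
  IsUPF u a ∧ ∀ i : Fin n, (i : ℕ) + 1 < n → (i : ℕ) + 1 < countLt a (u i)

lemma countLt_mono {n : ℕ} (a : Fin n → ℕ) {s t : ℕ} (h : s ≤ t) :
    countLt a s ≤ countLt a t := by
  apply Finset.card_le_card
  intro j hj
  simp only [Finset.mem_filter] at *
  exact ⟨hj.1, lt_of_lt_of_le hj.2 h⟩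

/-- For `n ≥ 1` and a weakly increasing vector `u` of positive integers, the identity
map is a bijection from the increasing prime `u`-parking functions onto the increasing
`u'`-parking functions, where `u' = (u_0, u_0, u_1, …, u_{n-2})`; in particular the
two sets have the same cardinality. -/
theorem stmt16 (n : ℕ) (hn : 1 ≤ n) (u : Fin n → ℕ) (hu : Monotone u)
    (hpos : ∀ i, 0 < u i) :
    Set.BijOn id {a : Fin n → ℕ | Monotone a ∧ IsPrimeUPF u a}
        {a : Fin n → ℕ | Monotone a ∧
          IsUPF (fun i : Fin n => u ⟨(i : ℕ) - 1, lt_of_le_of_lt (Nat.sub_le _ _) i.isLt⟩) a} ∧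
      {a : Fin n → ℕ | Monotone a ∧ IsPrimeUPF u a}.ncard
        = {a : Fin n → ℕ | Monotone a ∧
            IsUPF (fun i : Fin n => u ⟨(i : ℕ) - 1, lt_of_le_of_lt (Nat.sub_le _ _) i.isLt⟩)
              a}.ncard := by
  set u' : Fin n → ℕ := fun i : Fin n =>
    u ⟨(i : ℕ) - 1, lt_of_le_of_lt (Nat.sub_le _ _) i.isLt⟩ with hu'
  have hset : {a : Fin n → ℕ | Monotone a ∧ IsPrimeUPF u a}
      = {a : Fin n → ℕ | Monotone a ∧ IsUPF u' a} := by
    ext a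
    simp only [Set.mem_setOf_eq]
    constructor
    · rintro ⟨hma, hupf, hprime⟩
      refine ⟨hma, fun i => ?_⟩
      rcases Nat.eq_zero_or_pos (i : ℕ) with h0 | h1
      · have hik : (⟨(i : ℕ) - 1, lt_of_le_of_lt (Nat.sub_le _ _) i.isLt⟩ : Fin n)
            = ⟨0, hn⟩ := by ext; simp [h0]
        have h := hupf ⟨0, hn⟩
        simp only [Fin.val_mk] at h
        simp only [hu', hik, h0]
        exact h
      · have hlt : ((i : ℕ) - 1) + 1 < n := by omega
        have h := hprime ⟨(i : ℕ) - 1, lt_of_le_of_lt (Nat.sub_le _ _) i.isLt⟩ hlt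
        simp only [Fin.val_mk] at h
        simp only [hu']
        omega
    · rintro ⟨hma, hupf⟩
      refine ⟨hma, ⟨fun i => ?_, fun i hi => ?_⟩⟩
      · have h1 := hupf i
        have h2 : u' i ≤ u i := by
          apply hu
          show ((i : ℕ) - 1 : ℕ) ≤ (i : ℕ)
          omega
        exact le_trans h1 (countLt_mono a h2)
      · have h1 := hupf ⟨(i : ℕ) + 1, hi⟩
        have h2 : u' ⟨(i : ℕ) + 1, hi⟩ = u i := by
          simp only [hu']
          congr 1
        rw [h2] at h1
        simp only [Fin.val_mk] at h1
        omega
  rw [hset]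
  exact ⟨Set.bijOn_id _, rfl⟩
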